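/- Price of Frugality for Profit is at Most the Price of Frugality for Reward: Let (A, f, c) be a multi-agent contract instance with monotone f (i.e., f(S) ≤ f(T) for S ⊆ T), let 0 < b < B, and suppose p({i}) ≤ b for every agent i ∈ A. Then Max-Profit(B) · Max-Reward(b) ≤ Max-Profit(b) · Max-Reward(B). -/
import Mathlib


open scoped BigOperators ENNReal
open Finset

/-- Marginal contribution of agent `i` to set `S`: `f_S(i) = f(S) - f(S \ {i})`. -/
noncomputable def marginal {α : Type*} [DecidableEq α] (f : Finset α → ℝ) (S : Finset α)
    (i : α) : ℝ :=
  f S - f (S.erase i)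

/-- Payment needed to incentivize `S`, valued in `[0,∞]`, with the conventions
`0/0 = 0` and `x/0 = ∞` for `x > 0` (these hold for ENNReal division). -/
noncomputable def payment {α : Type*} [DecidableEq α] (f : Finset α → ℝ) (c : α → ℝ)
    (S : Finset α) : ℝ≥0∞ :=
  ∑ i ∈ S, ENNReal.ofReal (c i) / ENNReal.ofReal (marginal f S i)

/-- The principal's profit from incentivizing `S`: `g(S) = (1 - p(S)) · f(S)`. -/
noncomputable def profit {α : Type*} [DecidableEq α] (f : Finset α → ℝ) (c : α → ℝ)
    (S : Finset α) : ℝ :=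
  (1 - (payment f c S).toReal) * f S

/-- `f` is monotone. -/
def IsMonotoneFn {α : Type*} (f : Finset α → ℝ) : Prop :=
  ∀ ⦃S T : Finset α⦄, S ⊆ T → f S ≤ f T

/-- `f` is subadditive. -/
def IsSubadditive {α : Type*} [DecidableEq α] (f : Finset α → ℝ) : Prop :=
  ∀ S T : Finset α, f (S ∪ T) ≤ f S + f T

/-- `f` is submodular (decreasing marginal values). -/
def IsSubmodular {α : Type*} [DecidableEq α] (f : Finset α → ℝ) : Prop :=
  ∀ ⦃S T : Finset α⦄, S ⊆ T → ∀ i ∉ T, f (insert i T) - f T ≤ f (insert i S) - f S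

/-- `f` is additive. -/
def IsAdditive {α : Type*} [DecidableEq α] (f : Finset α → ℝ) : Prop :=
  ∀ S : Finset α, f S = ∑ i ∈ S, f {i}

/-- `f` is XOS: a finite max of nonnegative additive functions. -/
def IsXOS {α : Type*} (f : Finset α → ℝ) : Prop :=
  ∃ (k : ℕ) (a : Fin (k + 1) → α → ℝ),
    (∀ j i, 0 ≤ a j i) ∧
    ∀ S : Finset α, f S = Finset.univ.sup' Finset.univ_nonempty (fun j => ∑ i ∈ S, a j i)

/-- Agent `i` is light: it can be incentivized with payment at most `1/2`. -/
def isLight {α : Type*} [DecidableEq α] (f : Finset α → ℝ) (c : α → ℝ) (i : α) : Prop :=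
  payment f c {i} ≤ ENNReal.ofReal (1 / 2)

/-- `S` is budget-feasible for budget `B`. -/
def feasible {α : Type*} [DecidableEq α] (f : Finset α → ℝ) (c : α → ℝ) (B : ℝ)
    (S : Finset α) : Prop :=
  payment f c S ≤ ENNReal.ofReal B

/-- `S` is a budget-feasible set of light agents. -/
def feasibleLight {α : Type*} [DecidableEq α] (f : Finset α → ℝ) (c : α → ℝ) (B : ℝ)
    (S : Finset α) : Prop :=
  (∀ i ∈ S, isLight f c i) ∧ payment f c S ≤ ENNReal.ofReal B

/-- The maximum (supremum) value of objective `φ` over sets satisfying `P`. -/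
noncomputable def maxVal {α : Type*} (φ : Finset α → ℝ) (P : Finset α → Prop) : ℝ :=
  sSup (φ '' {S | P S})

/-- `φ` is a BEST objective for the instance `(f, c)`: it is nonnegative, sandwiched between
profit and reward, and satisfies `φ(S) ≤ f(S \ {i}) + φ({i})` for `i ∈ S`. -/
def IsBEST {α : Type*} [DecidableEq α] (f : Finset α → ℝ) (c : α → ℝ)
    (φ : Finset α → ℝ) : Prop :=
  (∀ S, 0 ≤ φ S) ∧
  (∀ S, φ S ≤ f S) ∧
  (∀ S, payment f c S ≤ 1 → (1 - (payment f c S).toReal) * f S ≤ φ S) ∧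
  (∀ S, ∀ i ∈ S, φ S ≤ f (S.erase i) + φ {i})

/-- `φ` is a BEST objective for the instance `(f, c)` restricted to sets satisfying `P`. -/
def IsBESTOn {α : Type*} [DecidableEq α] (f : Finset α → ℝ) (c : α → ℝ)
    (P : Finset α → Prop) (φ : Finset α → ℝ) : Prop :=
  (∀ S, P S → 0 ≤ φ S) ∧
  (∀ S, P S → φ S ≤ f S) ∧
  (∀ S, P S → payment f c S ≤ 1 → (1 - (payment f c S).toReal) * f S ≤ φ S) ∧
  (∀ S, P S → ∀ i ∈ S, φ S ≤ f (S.erase i) + φ {i})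

section Aux

variable {α : Type*} [Fintype α]

lemma le_maxVal (φ : Finset α → ℝ) {P : Finset α → Prop} {S : Finset α} (hS : P S) :
    φ S ≤ maxVal φ P :=
  le_csSup (Set.toFinite _).bddAbove ⟨S, hS, rfl⟩

lemma maxVal_attained (φ : Finset α → ℝ) {P : Finset α → Prop} (h : ∃ S, P S) :
    ∃ S, P S ∧ φ S = maxVal φ P := by
  obtain ⟨S0, hS0⟩ := h
  have hne : (φ '' {S | P S}).Nonempty := ⟨φ S0, S0, hS0, rfl⟩
  obtain ⟨S, hS, hv⟩ := hne.csSup_mem (Set.toFinite _)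
  exact ⟨S, hS, hv⟩

end Aux

/-- **Price of Frugality for Profit is at Most the Price of Frugality for Reward.** -/
theorem pof_profit_le_pof_reward {α : Type*} [DecidableEq α] [Fintype α]
    (f : Finset α → ℝ) (c : α → ℝ)
    (hf01 : ∀ S, f S ∈ Set.Icc (0 : ℝ) 1) (hf0 : f ∅ = 0)
    (hmono : IsMonotoneFn f) (hc : ∀ i, 0 ≤ c i)
    (b B : ℝ) (hb : 0 < b) (hbB : b < B)
    (hsing : ∀ i, payment f c {i} ≤ ENNReal.ofReal b) :
    maxVal (profit f c) (feasible f c B) * maxVal f (feasible f c b) ≤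
      maxVal (profit f c) (feasible f c b) * maxVal f (feasible f c B) := by
  have hB : 0 < B := hb.trans hbB
  have hfb : feasible f c b ∅ := by simp [feasible, payment]
  have hfB : feasible f c B ∅ := by simp [feasible, payment]
  have hprof0 : profit f c ∅ = 0 := by simp [profit, payment, hf0]
  have hMPb0 : 0 ≤ maxVal (profit f c) (feasible f c b) := by
    have := le_maxVal (profit f c) hfb
    rw [hprof0] at this; exact this
  have hMRb0 : 0 ≤ maxVal f (feasible f c b) := le_trans (hf01 ∅).1 (le_maxVal f hfb)
  have hfeas_mono : ∀ S, feasible f c b S → feasible f c B S := fun S hS =>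
    hS.trans (ENNReal.ofReal_le_ofReal hbB.le)
  have hMR_le : maxVal f (feasible f c b) ≤ maxVal f (feasible f c B) := by
    have hne : (f '' {S | feasible f c b S}).Nonempty := ⟨f ∅, ∅, hfb, rfl⟩
    apply csSup_le hne
    rintro x ⟨S, hS, rfl⟩
    exact le_maxVal f (hfeas_mono S hS)
  obtain ⟨S0, hS0f, hS0⟩ := maxVal_attained (profit f c) ⟨∅, hfB⟩
  by_cases hcase : payment f c S0 ≤ ENNReal.ofReal b
  · have h1 : maxVal (profit f c) (feasible f c B) ≤ maxVal (profit f c) (feasible f c b) := by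
      rw [← hS0]; exact le_maxVal _ hcase
    calc maxVal (profit f c) (feasible f c B) * maxVal f (feasible f c b)
        ≤ maxVal (profit f c) (feasible f c b) * maxVal f (feasible f c b) :=
          mul_le_mul_of_nonneg_right h1 hMRb0
      _ ≤ maxVal (profit f c) (feasible f c b) * maxVal f (feasible f c B) :=
          mul_le_mul_of_nonneg_left hMR_le hMPb0
  · push_neg at hcase
    have hne : payment f c S0 ≠ ⊤ := by
      intro h
      have : (⊤ : ℝ≥0∞) ≤ ENNReal.ofReal B := h ▸ hS0f
      exact (ENNReal.ofReal_lt_top.trans_le this).false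
    have ht : b < (payment f c S0).toReal :=
      (ENNReal.ofReal_lt_iff_lt_toReal hb.le hne).mp hcase
    obtain ⟨T, hTf, hT⟩ := maxVal_attained f ⟨∅, hfb⟩
    have htT : (payment f c T).toReal ≤ b := ENNReal.toReal_le_of_le_ofReal hb.le hTf
    have hfT0 : 0 ≤ f T := (hf01 T).1
    have hstep1 : (1 - b) * maxVal f (feasible f c b) ≤ maxVal (profit f c) (feasible f c b) := by
      have h2 : (1 - b) * f T ≤ profit f c T := by
        unfold profit
        exact mul_le_mul_of_nonneg_right (by linarith) hfT0
      rw [← hT]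
      exact h2.trans (le_maxVal _ hTf)
    have hfS0 : 0 ≤ f S0 := (hf01 S0).1
    have hstep2 : profit f c S0 ≤ (1 - b) * f S0 := by
      unfold profit
      exact mul_le_mul_of_nonneg_right (by linarith) hfS0
    have hfS0B : f S0 ≤ maxVal f (feasible f c B) := le_maxVal f hS0f
    calc maxVal (profit f c) (feasible f c B) * maxVal f (feasible f c b)
        = profit f c S0 * maxVal f (feasible f c b) := by rw [hS0]
      _ ≤ ((1 - b) * f S0) * maxVal f (feasible f c b) :=
          mul_le_mul_of_nonneg_right hstep2 hMRb0
      _ = f S0 * ((1 - b) * maxVal f (feasible f c b)) := by ring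
      _ ≤ f S0 * maxVal (profit f c) (feasible f c b) :=
          mul_le_mul_of_nonneg_left hstep1 hfS0
      _ = maxVal (profit f c) (feasible f c b) * f S0 := by ring
      _ ≤ maxVal (profit f c) (feasible f c b) * maxVal f (feasible f c B) :=
          mul_le_mul_of_nonneg_left hfS0B hMPb0
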